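/- The product operation on face spheres is well-defined on extension-contiguity equivalence classes: if f₁ ≈ f₂ and g₁ ≈ g₂ are extension-contiguity equivalent face spheres in (X, x₀), then f₁·g₁ ≈ f₂·g₂. -/

import Mathlib

structure ASC (V : Type) where
  faces : Set (Finset V)
  down_closed : ∀ ⦃s t : Finset V⦄, s ∈ faces → t ⊆ s → t ∈ faces

variable {U V W : Type}

/-- A vertex map is a simplicial map if it sends every simplex to a simplex. -/
def IsSimplicialMap [DecidableEq W] (K : ASC V) (L : ASC W) (f : V → W) : Prop :=
  ∀ s ∈ K.faces, s.image f ∈ L.faces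

/-- Two maps are contiguous if `f(σ) ∪ g(σ)` is a simplex for every simplex `σ`. -/
def Contiguous [DecidableEq W] (K : ASC V) (L : ASC W) (f g : V → W) : Prop :=
  ∀ s ∈ K.faces, s.image f ∪ s.image g ∈ L.faces

/-- Contiguity equivalence: a finite chain of contiguities through simplicial maps. -/
def ContigEquiv [DecidableEq W] (K : ASC V) (L : ASC W) : (V → W) → (V → W) → Prop :=
  Relation.ReflTransGen (fun a b =>
    IsSimplicialMap K L a ∧ IsSimplicialMap K L b ∧ Contiguous K L a b)

/-- The categorical product of simplicial complexes. -/
def ASC.prod [DecidableEq V] [DecidableEq W] (K : ASC V) (L : ASC W) : ASC (V × W) where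
  faces := {s | s.image Prod.fst ∈ K.faces ∧ s.image Prod.snd ∈ L.faces}
  down_closed := fun _s _t hs hts =>
    ⟨K.down_closed hs.1 (Finset.image_subset_image hts),
     L.down_closed hs.2 (Finset.image_subset_image hts)⟩

/-- The simplicial interval `I_m` on vertices `0, …, m`. -/
def interval (m : ℕ) : ASC ℕ where
  faces := {s | (∀ x ∈ s, x ≤ m) ∧ ∀ x ∈ s, ∀ y ∈ s, x ≤ y + 1}
  down_closed := fun _s _t hs hts =>
    ⟨fun x hx => hs.1 x (hts hx), fun x hx y hy => hs.2 x (hts hx) y (hts hy)⟩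

/-- The vertex map of `α_i : I_{m+1} → I_m`. -/
def alpha (i : ℕ) : ℕ → ℕ := fun s => if s ≤ i then s else s - 1

/-- The categorical product `I_m × I_n`. -/
def prodInterval (m n : ℕ) : ASC (ℕ × ℕ) := (interval m).prod (interval n)

/-- A face sphere: a simplicial map `(I_m × I_n, ∂(I_m × I_n)) → (X, x₀)`. -/
def IsFaceSphere [DecidableEq V] (X : ASC V) (x₀ : V) (m n : ℕ) (f : ℕ × ℕ → V) : Prop :=
  IsSimplicialMap (prodInterval m n) X f ∧
  ∀ p : ℕ × ℕ, p.1 ≤ m → p.2 ≤ n →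
    (p.1 = 0 ∨ p.1 = m ∨ p.2 = 0 ∨ p.2 = n) → f p = x₀

/-- Contiguity equivalence of face spheres, relative the boundary. -/
def FaceContigEquiv [DecidableEq V] (X : ASC V) (x₀ : V) (m n : ℕ) :
    (ℕ × ℕ → V) → (ℕ × ℕ → V) → Prop :=
  Relation.ReflTransGen (fun a b =>
    IsFaceSphere X x₀ m n a ∧ IsFaceSphere X x₀ m n b ∧
      Contiguous (prodInterval m n) X a b)

/-- The trivial extension `f ∘ (α_m^r × α_n^s)`. -/
def trivExt (m n r s : ℕ) (f : ℕ × ℕ → V) : ℕ × ℕ → V :=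
  f ∘ Prod.map ((alpha m)^[r]) ((alpha n)^[s])

/-- Extension-contiguity equivalence of face spheres of possibly different sizes. -/
def ExtContigEquiv [DecidableEq V] (X : ASC V) (x₀ : V) (m n : ℕ) (f : ℕ × ℕ → V)
    (m' n' : ℕ) (g : ℕ × ℕ → V) : Prop :=
  ∃ M N, m ≤ M ∧ m' ≤ M ∧ n ≤ N ∧ n' ≤ N ∧
    FaceContigEquiv X x₀ M N (trivExt m n (M - m) (N - n) f)
      (trivExt m' n' (M - m') (N - n') g)

/-- The product `f · g` of face spheres: `f` in the lower-left block,
a translate of `g` in the upper-right block, basepoint elsewhere. -/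
def fsMul (x₀ : V) (m n : ℕ) (f g : ℕ × ℕ → V) : ℕ × ℕ → V := fun p =>
  if p.1 ≤ m ∧ p.2 ≤ n then f p
  else if m + 1 ≤ p.1 ∧ n + 1 ≤ p.2 then g (p.1 - (m + 1), p.2 - (n + 1))
  else x₀

/-!
Trivial extensions, and the block layout of a product of extensions, are both precompositions
with collapses: monotone maps `[0, M] → [0, K]` fixing the endpoints, with steps `0` or `1`. A
collapse can be raised to `min · K` one vertex at a time, each raise being a contiguity, so all
reparametrisations of a face sphere by collapses are contiguity equivalent. Hence the extension
of `f · g` to a common size is equivalent to the product of the extensions of `f` and `g`. The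
product respects contiguity in each factor, because a simplex of `I_{m+r+1} × I_{n+s+1}` either
lies in one of the two blocks or is sent to `x₀`.
-/

open Finset Relation

section Simplicial

variable {α β γ δ : Type} [DecidableEq β]

theorem contiguous_self_iff {K : ASC α} {L : ASC β} {f : α → β} :
    Contiguous K L f f ↔ IsSimplicialMap K L f := by
  simp only [Contiguous, IsSimplicialMap, union_self]

theorem Contiguous.symm {K : ASC α} {L : ASC β} {f g : α → β} (h : Contiguous K L f g) :
    Contiguous K L g f := fun σ hσ => union_comm (σ.image f) _ ▸ h σ hσ

theorem IsSimplicialMap.comp [DecidableEq γ] {K : ASC α} {L : ASC β} {M : ASC γ}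
    {g : β → γ} {f : α → β} (hg : IsSimplicialMap L M g) (hf : IsSimplicialMap K L f) :
    IsSimplicialMap K M (g ∘ f) := fun σ hσ => by
  rw [← image_image]
  exact hg _ (hf σ hσ)

theorem Contiguous.comp_left [DecidableEq γ] {K : ASC α} {L : ASC β} {M : ASC γ}
    {f g : α → β} {h : β → γ} (hfg : Contiguous K L f g) (hh : IsSimplicialMap L M h) :
    Contiguous K M (h ∘ f) (h ∘ g) := fun σ hσ => by
  rw [← image_image, ← image_image, ← image_union]
  exact hh _ (hfg σ hσ)

theorem Contiguous.comp_right [DecidableEq α] {J : ASC δ} {K : ASC α} {L : ASC β}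
    {f g : α → β} {k : δ → α} (hfg : Contiguous K L f g) (hk : IsSimplicialMap J K k) :
    Contiguous J L (f ∘ k) (g ∘ k) := fun σ hσ => by
  rw [← image_image, ← image_image]
  exact hfg _ (hk σ hσ)

theorem Contiguous.prodMap [DecidableEq α] [DecidableEq γ] [DecidableEq δ]
    {K : ASC α} {K' : ASC β} {L : ASC γ} {L' : ASC δ} {φ φ' : α → β} {χ χ' : γ → δ}
    (hφ : Contiguous K K' φ φ') (hχ : Contiguous L L' χ χ') :
    Contiguous (K.prod L) (K'.prod L') (Prod.map φ χ) (Prod.map φ' χ') := by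
  rintro σ ⟨hσ₁, hσ₂⟩
  constructor
  · simpa only [image_union, image_image, Prod.map_fst'] using hφ _ hσ₁
  · simpa only [image_union, image_image, Prod.map_snd'] using hχ _ hσ₂

theorem IsSimplicialMap.prodMap [DecidableEq α] [DecidableEq γ] [DecidableEq δ]
    {K : ASC α} {K' : ASC β} {L : ASC γ} {L' : ASC δ} {φ : α → β} {χ : γ → δ}
    (hφ : IsSimplicialMap K K' φ) (hχ : IsSimplicialMap L L' χ) :
    IsSimplicialMap (K.prod L) (K'.prod L') (Prod.map φ χ) :=
  contiguous_self_iff.1 <| (contiguous_self_iff.2 hφ).prodMap (contiguous_self_iff.2 hχ)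

end Simplicial

theorem mem_interval_faces {K : ℕ} {σ : Finset ℕ} :
    σ ∈ (interval K).faces ↔ (∀ x ∈ σ, x ≤ K) ∧ ∀ x ∈ σ, ∀ y ∈ σ, x ≤ y + 1 :=
  Iff.rfl

/-- The composites `I_M → I_K` of the maps `α_i`. -/
structure IsCollapse (M K : ℕ) (φ : ℕ → ℕ) : Prop where
  map_zero : φ 0 = 0
  map_top : φ M = K
  step : ∀ i < M, φ (i + 1) = φ i ∨ φ (i + 1) = φ i + 1

def CollapseStep (M K : ℕ) (φ ψ : ℕ → ℕ) : Prop :=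
  IsCollapse M K φ ∧ IsCollapse M K ψ ∧ Contiguous (interval M) (interval K) φ ψ

def collapseDefect (M K : ℕ) (φ : ℕ → ℕ) : ℕ :=
  ∑ i ∈ range (M + 1), (min i K - φ i)

theorem isCollapse_min {M K : ℕ} (h : K ≤ M) : IsCollapse M K (min · K) :=
  ⟨by simp, by simp [h], fun i _ => by omega⟩

theorem isCollapse_sub {M K c : ℕ} (h : M = c + K) : IsCollapse M K (· - c) :=
  ⟨by simp, by simp [h], fun i _ => by omega⟩

def blockMap (M K : ℕ) (φ ψ : ℕ → ℕ) (i : ℕ) : ℕ :=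
  if i ≤ M then φ i else K + 1 + ψ (i - (M + 1))

namespace IsCollapse

variable {M K : ℕ} {φ : ℕ → ℕ}

theorem congr (h : IsCollapse M K φ) {ψ : ℕ → ℕ} (hψ : ∀ i ≤ M, φ i = ψ i) :
    IsCollapse M K ψ where
  map_zero := hψ 0 (Nat.zero_le _) ▸ h.map_zero
  map_top := hψ M le_rfl ▸ h.map_top
  step i hi := hψ i hi.le ▸ hψ (i + 1) hi ▸ h.step i hi

theorem le_le_add (h : IsCollapse M K φ) {i j : ℕ} (hij : i ≤ j) (hj : j ≤ M) :
    φ i ≤ φ j ∧ φ j ≤ φ i + (j - i) := by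
  induction j, hij using Nat.le_induction with
  | base => simp
  | succ j hij ih =>
    have := h.step j (by omega)
    have := ih (by omega)
    omega

theorem le_self (h : IsCollapse M K φ) {i : ℕ} (hi : i ≤ M) : φ i ≤ i := by
  simpa [h.map_zero] using (h.le_le_add (Nat.zero_le i) hi).2

theorem le_top (h : IsCollapse M K φ) {i : ℕ} (hi : i ≤ M) : φ i ≤ K :=
  h.map_top ▸ (h.le_le_add hi le_rfl).1

theorem top_le (h : IsCollapse M K φ) : K ≤ M :=
  h.map_top ▸ h.le_self le_rfl

theorem isSimplicialMap (h : IsCollapse M K φ) :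
    IsSimplicialMap (interval M) (interval K) φ := by
  intro σ hσ
  simp only [mem_interval_faces, forall_mem_image]
  refine ⟨fun x hx => h.le_top (hσ.1 x hx), fun x hx y hy => ?_⟩
  have hxy := hσ.2 x hx y hy
  rcases le_or_gt x y with hle | hlt
  · have := h.le_le_add hle (hσ.1 y hy)
    omega
  · have := h.le_le_add hlt.le (hσ.1 x hx)
    omega

theorem collapseStep_self (h : IsCollapse M K φ) : CollapseStep M K φ φ :=
  ⟨h, h, contiguous_self_iff.2 h.isSimplicialMap⟩

theorem blockMap {M' K' : ℕ} {ψ : ℕ → ℕ} (hφ : IsCollapse M K φ) (hψ : IsCollapse M' K' ψ) :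
    IsCollapse (M + M' + 1) (K + K' + 1) (_root_.blockMap M K φ ψ) where
  map_zero := by simp [_root_.blockMap, hφ.map_zero]
  map_top := by
    rw [_root_.blockMap, if_neg (by omega), show M + M' + 1 - (M + 1) = M' by omega, hψ.map_top]
    omega
  step i hi := by
    unfold _root_.blockMap
    rcases lt_trichotomy i M with hlt | rfl | hgt
    · simpa [hlt.le, Nat.succ_le_of_lt hlt] using hφ.step i hlt
    · simp [hφ.map_top, hψ.map_zero]
    · have := hψ.step (i - (M + 1)) (by omega)
      rw [if_neg (by omega), if_neg (by omega), show i + 1 - (M + 1) = i - (M + 1) + 1 by omega]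
      omega

theorem exists_flat_rise (h : IsCollapse M K φ) {i : ℕ} (hi : i ≤ M) (hne : φ i ≠ min i K) :
    ∃ j, j + 2 ≤ M ∧ φ (j + 1) = φ j ∧ φ (j + 2) = φ (j + 1) + 1 := by
  by_contra! hno
  have flat_persists : ∀ k j, j + 1 + k ≤ M → φ (j + 1) = φ j → φ (j + 1 + k) = φ j := by
    intro k
    induction k with
    | zero => exact fun _ _ hj => hj
    | succ k ih =>
      intro j hk hj
      have hnext : φ (j + 2) = φ (j + 1) :=
        (h.step (j + 1) (by omega)).resolve_right (hno j (by omega) hj)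
      rw [show j + 1 + (k + 1) = j + 1 + 1 + k by omega, ih (j + 1) (by omega) hnext, hj]
  have rise_or_top : ∀ j ≤ M, φ j = j ∨ φ j = K := by
    intro j
    induction j with
    | zero => exact fun _ => Or.inl h.map_zero
    | succ j ih =>
      intro hj
      rcases h.step j (by omega) with hflat | hrise
      · have := flat_persists (M - (j + 1)) j (by omega) hflat
        rw [show j + 1 + (M - (j + 1)) = M by omega, h.map_top] at this
        omega
      · have := h.le_top hj
        have := ih (by omega)
        omega
  have := rise_or_top i hi
  have := h.le_self hi
  have := h.le_top hi
  omega

theorem update_succ (h : IsCollapse M K φ) {j : ℕ} (hj : j + 2 ≤ M) (hflat : φ (j + 1) = φ j)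
    (hrise : φ (j + 2) = φ (j + 1) + 1) :
    IsCollapse M K (Function.update φ (j + 1) (φ (j + 1) + 1)) := by
  refine ⟨?_, ?_, fun x hx => ?_⟩
  · simp only [Function.update_apply, h.map_zero, ite_eq_right_iff]
    omega
  · simp only [Function.update_apply, h.map_top, ite_eq_right_iff]
    omega
  obtain rfl | rfl | ⟨hxj, hxj'⟩ : x = j ∨ x = j + 1 ∨ (x ≠ j ∧ x ≠ j + 1) := by omega
  · simp [hflat]
  · simp [hrise]
  · simpa [Function.update_apply, hxj, hxj'] using h.step x hx

/-- Only the simplices through `j + 1` see the change, and on them both maps take just the values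
`φ j` and `φ j + 1`. -/
theorem contiguous_update_succ
    (h : IsCollapse M K φ) {j : ℕ} (hj : j + 2 ≤ M) (hflat : φ (j + 1) = φ j)
    (hrise : φ (j + 2) = φ (j + 1) + 1) :
    Contiguous (interval M) (interval K) φ (Function.update φ (j + 1) (φ (j + 1) + 1)) := by
  set ψ := Function.update φ (j + 1) (φ (j + 1) + 1)
  intro σ hσ
  by_cases hmem : j + 1 ∈ σ
  · have hnear : ∀ x ∈ σ, x = j ∨ x = j + 1 ∨ x = j + 2 := fun x hx => by
      have := hσ.2 x hx _ hmem
      have := hσ.2 _ hmem x hx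
      omega
    have hvals : ∀ x ∈ σ, (φ x = φ (j + 1) ∨ φ x = φ (j + 1) + 1) ∧
        (ψ x = φ (j + 1) ∨ ψ x = φ (j + 1) + 1) := fun x hx => by
      rcases hnear x hx with rfl | rfl | rfl <;> simp [ψ, hflat, hrise]
    have htop := h.le_top (i := j + 2) hj
    simp only [mem_interval_faces, mem_union, mem_image]
    constructor
    · rintro _ (⟨x, hx, rfl⟩ | ⟨x, hx, rfl⟩) <;> have := hvals x hx <;> omega
    · rintro _ (⟨x, hx, rfl⟩ | ⟨x, hx, rfl⟩) _ (⟨y, hy, rfl⟩ | ⟨y, hy, rfl⟩) <;>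
        have := hvals x hx <;> have := hvals y hy <;> omega
  · have : σ.image ψ = σ.image φ := image_congr fun x hx => by
      simp [ψ, show x ≠ j + 1 from fun h => hmem (h ▸ hx)]
    rw [this, union_self]
    exact h.isSimplicialMap σ hσ

theorem collapseDefect_update_succ_lt
    (h : IsCollapse M K φ) {j : ℕ} (hj : j + 2 ≤ M) (hflat : φ (j + 1) = φ j)
    (hrise : φ (j + 2) = φ (j + 1) + 1) :
    collapseDefect M K (Function.update φ (j + 1) (φ (j + 1) + 1)) < collapseDefect M K φ := by
  refine sum_lt_sum (fun x _ => ?_) ⟨j + 1, mem_range.2 (by omega), ?_⟩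
  · rw [Function.update_apply]
    split_ifs with hx
    · subst hx
      omega
    · omega
  · have := h.le_self (i := j) (by omega)
    have := h.le_top (i := j + 2) hj
    rw [Function.update_apply, if_pos rfl]
    omega

end IsCollapse

theorem IsCollapse.reflTransGen_collapseStep_min {M K : ℕ} {φ : ℕ → ℕ} (h : IsCollapse M K φ) :
    ReflTransGen (CollapseStep M K) φ (min · K) := by
  by_cases hmin : ∀ i ≤ M, φ i = min i K
  · refine .single ⟨h, isCollapse_min h.top_le, fun σ hσ => ?_⟩
    rw [image_congr fun i hi => hmin i (hσ.1 i hi), union_self]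
    exact (isCollapse_min h.top_le).isSimplicialMap σ hσ
  · push Not at hmin
    obtain ⟨i, hi, hne⟩ := hmin
    obtain ⟨j, hj, hflat, hrise⟩ := h.exists_flat_rise hi hne
    exact .head ⟨h, h.update_succ hj hflat hrise, h.contiguous_update_succ hj hflat hrise⟩
      (h.update_succ hj hflat hrise).reflTransGen_collapseStep_min
termination_by collapseDefect M K φ
decreasing_by exact h.collapseDefect_update_succ_lt hj hflat hrise

theorem iterate_alpha_apply {K a i : ℕ} (h : i ≤ K + a) : (alpha K)^[a] i = min i K := by
  induction a generalizing i with
  | zero => simp only [Function.iterate_zero, id_eq]; omega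
  | succ a ih =>
    rw [Function.iterate_succ_apply, ih (by unfold alpha; split_ifs <;> omega)]
    unfold alpha
    split_ifs <;> omega

theorem isCollapse_iterate_alpha {M K : ℕ} (h : K ≤ M) : IsCollapse M K ((alpha K)^[M - K]) :=
  (isCollapse_min h).congr fun _ hi => (iterate_alpha_apply (by omega)).symm

theorem FaceContigEquiv.symm {V : Type} [DecidableEq V] {X : ASC V} {x₀ : V} {M N : ℕ}
    {a b : ℕ × ℕ → V} (h : FaceContigEquiv X x₀ M N a b) : FaceContigEquiv X x₀ M N b a :=
  ReflTransGen.mono (fun _ _ ⟨ha, hb, hab⟩ => ⟨hb, ha, hab.symm⟩) _ _ (ReflTransGen.swap _ _ h)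

section FaceSphere

variable {V : Type} [DecidableEq V] {X : ASC V} {x₀ : V}

theorem IsFaceSphere.singleton_base_mem {m n : ℕ} {f : ℕ × ℕ → V}
    (hf : IsFaceSphere X x₀ m n f) : {x₀} ∈ X.faces := by
  have h00 : ({(0, 0)} : Finset (ℕ × ℕ)) ∈ (prodInterval m n).faces := by
    refine ⟨⟨?_, ?_⟩, ⟨?_, ?_⟩⟩ <;> simp
  simpa [hf.2 (0, 0) (Nat.zero_le _) (Nat.zero_le _) (Or.inl rfl)] using hf.1 _ h00

theorem IsFaceSphere.comp_prodMap {K L M N : ℕ} {f : ℕ × ℕ → V} {φ χ : ℕ → ℕ}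
    (hf : IsFaceSphere X x₀ K L f) (hφ : IsCollapse M K φ) (hχ : IsCollapse N L χ) :
    IsFaceSphere X x₀ M N (f ∘ Prod.map φ χ) := by
  refine ⟨hf.1.comp (hφ.isSimplicialMap.prodMap hχ.isSimplicialMap), fun p h₁ h₂ hp => ?_⟩
  refine hf.2 _ (hφ.le_top h₁) (hχ.le_top h₂) ?_
  rcases hp with hp | hp | hp | hp <;>
    simp [hp, hφ.map_zero, hφ.map_top, hχ.map_zero, hχ.map_top]

theorem IsFaceSphere.trivExt {K L M N : ℕ} {f : ℕ × ℕ → V} (hf : IsFaceSphere X x₀ K L f)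
    (hK : K ≤ M) (hL : L ≤ N) : IsFaceSphere X x₀ M N (trivExt K L (M - K) (N - L) f) :=
  hf.comp_prodMap (isCollapse_iterate_alpha hK) (isCollapse_iterate_alpha hL)

theorem IsFaceSphere.faceContigEquiv_comp_min {K L M N : ℕ} {f : ℕ × ℕ → V} {φ χ : ℕ → ℕ}
    (hf : IsFaceSphere X x₀ K L f) (hφ : IsCollapse M K φ) (hχ : IsCollapse N L χ) :
    FaceContigEquiv X x₀ M N (f ∘ Prod.map φ χ) (f ∘ Prod.map (min · K) (min · L)) := by
  have lift_steps : ∀ {φ φ' χ χ'}, CollapseStep M K φ φ' → CollapseStep N L χ χ' →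
      FaceContigEquiv X x₀ M N (f ∘ Prod.map φ χ) (f ∘ Prod.map φ' χ') :=
    fun hφ hχ => .single ⟨hf.comp_prodMap hφ.1 hχ.1, hf.comp_prodMap hφ.2.1 hχ.2.1,
      (hφ.2.2.prodMap hχ.2.2).comp_left hf.1⟩
  have hmin := isCollapse_min hφ.top_le
  exact (ReflTransGen.lift' (fun a => f ∘ Prod.map a χ)
      (fun _ _ h => lift_steps h hχ.collapseStep_self) _ _ hφ.reflTransGen_collapseStep_min).trans
    (ReflTransGen.lift' (fun c => f ∘ Prod.map (min · K) c)
      (fun _ _ h => lift_steps hmin.collapseStep_self h) _ _ hχ.reflTransGen_collapseStep_min)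

theorem IsFaceSphere.faceContigEquiv_comp_prodMap {K L M N : ℕ} {f : ℕ × ℕ → V}
    {φ φ' χ χ' : ℕ → ℕ} (hf : IsFaceSphere X x₀ K L f) (hφ : IsCollapse M K φ)
    (hχ : IsCollapse N L χ) (hφ' : IsCollapse M K φ') (hχ' : IsCollapse N L χ') :
    FaceContigEquiv X x₀ M N (f ∘ Prod.map φ χ) (f ∘ Prod.map φ' χ') :=
  (hf.faceContigEquiv_comp_min hφ hχ).trans (hf.faceContigEquiv_comp_min hφ' hχ').symm

end FaceSphere

theorem prodInterval_faces_le {M N : ℕ} {σ : Finset (ℕ × ℕ)}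
    (hσ : σ ∈ (prodInterval M N).faces) {p : ℕ × ℕ} (hp : p ∈ σ) : p.1 ≤ M ∧ p.2 ≤ N :=
  ⟨hσ.1.1 _ (mem_image_of_mem _ hp), hσ.2.1 _ (mem_image_of_mem _ hp)⟩

theorem prodInterval_faces_adj {M N : ℕ} {σ : Finset (ℕ × ℕ)}
    (hσ : σ ∈ (prodInterval M N).faces) {p q : ℕ × ℕ} (hp : p ∈ σ) (hq : q ∈ σ) :
    p.1 ≤ q.1 + 1 ∧ p.2 ≤ q.2 + 1 :=
  ⟨hσ.1.2 _ (mem_image_of_mem _ hp) _ (mem_image_of_mem _ hq),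
    hσ.2.2 _ (mem_image_of_mem _ hp) _ (mem_image_of_mem _ hq)⟩

theorem prodInterval_faces_cases {M N : ℕ} {σ : Finset (ℕ × ℕ)}
    (hσ : σ ∈ (prodInterval M N).faces) (m n : ℕ) :
    (∀ p ∈ σ, p.1 ≤ m ∧ p.2 ≤ n) ∨ (∀ p ∈ σ, m + 1 ≤ p.1 ∧ n + 1 ≤ p.2) ∨
      ∀ p ∈ σ, (p.1 ≤ m → p.2 ≤ n → p.1 = m ∨ p.2 = n) ∧
        (m + 1 ≤ p.1 → n + 1 ≤ p.2 → p.1 = m + 1 ∨ p.2 = n + 1) := by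
  by_cases hlow : ∀ p ∈ σ, p.1 ≤ m ∧ p.2 ≤ n
  · exact Or.inl hlow
  by_cases hhigh : ∀ p ∈ σ, m + 1 ≤ p.1 ∧ n + 1 ≤ p.2
  · exact Or.inr (Or.inl hhigh)
  push Not at hlow hhigh
  obtain ⟨q, hq, hq'⟩ := hlow
  obtain ⟨q', hq₂, hq₂'⟩ := hhigh
  refine Or.inr (Or.inr fun p hp => ⟨fun h₁ h₂ => ?_, fun h₁ h₂ => ?_⟩)
  · have := prodInterval_faces_adj hσ hq hp
    omega
  · have := prodInterval_faces_adj hσ hp hq₂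
    omega

section FsMul

variable {V : Type} {x₀ : V} {m n r s : ℕ} {f g : ℕ × ℕ → V}

theorem fsMul_apply_of_le {p : ℕ × ℕ} (h₁ : p.1 ≤ m) (h₂ : p.2 ≤ n) :
    fsMul x₀ m n f g p = f p := by
  simp [fsMul, h₁, h₂]

theorem fsMul_apply_of_ge {p : ℕ × ℕ} (h₁ : m + 1 ≤ p.1) (h₂ : n + 1 ≤ p.2) :
    fsMul x₀ m n f g p = g (p.1 - (m + 1), p.2 - (n + 1)) := by
  simp [fsMul, h₁, h₂, show ¬p.1 ≤ m by omega]

variable [DecidableEq V] {X : ASC V}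

theorem fsMul_apply_eq_base (hf : IsFaceSphere X x₀ m n f) (hg : IsFaceSphere X x₀ r s g)
    {p : ℕ × ℕ} (hp₁ : p.1 ≤ m + r + 1) (hp₂ : p.2 ≤ n + s + 1)
    (hlow : p.1 ≤ m → p.2 ≤ n → p.1 = 0 ∨ p.1 = m ∨ p.2 = 0 ∨ p.2 = n)
    (hhigh : m + 1 ≤ p.1 → n + 1 ≤ p.2 →
      p.1 = m + 1 ∨ p.1 = m + r + 1 ∨ p.2 = n + 1 ∨ p.2 = n + s + 1) :
    fsMul x₀ m n f g p = x₀ := by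
  by_cases h : p.1 ≤ m ∧ p.2 ≤ n
  · rw [fsMul_apply_of_le h.1 h.2]
    exact hf.2 p h.1 h.2 (hlow h.1 h.2)
  by_cases h' : m + 1 ≤ p.1 ∧ n + 1 ≤ p.2
  · rw [fsMul_apply_of_ge h'.1 h'.2]
    exact hg.2 _ (by dsimp only; omega) (by dsimp only; omega)
      (by have := hhigh h'.1 h'.2; dsimp only; omega)
  · rw [fsMul, if_neg h, if_neg h']

/-- On the lower-left block `f · g` is `f` read through `min`, on the upper-right block it is `g`
read through a shift, and on a simplex meeting both blocks it is constant at `x₀`. -/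
theorem contiguous_fsMul {f' g' : ℕ × ℕ → V}
    (hf : IsFaceSphere X x₀ m n f) (hf' : IsFaceSphere X x₀ m n f')
    (hg : IsFaceSphere X x₀ r s g) (hg' : IsFaceSphere X x₀ r s g')
    (hff' : Contiguous (prodInterval m n) X f f') (hgg' : Contiguous (prodInterval r s) X g g') :
    Contiguous (prodInterval (m + r + 1) (n + s + 1)) X
      (fsMul x₀ m n f g) (fsMul x₀ m n f' g') := by
  intro σ hσ
  rcases prodInterval_faces_cases hσ m n with hlow | hhigh | hmid
  · have himage : ∀ a b : ℕ × ℕ → V,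
        σ.image (fsMul x₀ m n a b) = σ.image (a ∘ Prod.map (min · m) (min · n)) :=
      fun a b => image_congr fun p hp => by
        obtain ⟨h₁, h₂⟩ := hlow p hp
        rw [fsMul_apply_of_le h₁ h₂, Function.comp_apply, Prod.map_apply, min_eq_left h₁,
          min_eq_left h₂]
    rw [himage, himage]
    exact hff'.comp_right ((isCollapse_min (by omega)).isSimplicialMap.prodMap
      (isCollapse_min (by omega)).isSimplicialMap) σ hσ
  · have himage : ∀ a b : ℕ × ℕ → V,
        σ.image (fsMul x₀ m n a b) = σ.image (b ∘ Prod.map (· - (m + 1)) (· - (n + 1))) :=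
      fun a b => image_congr fun p hp => by
        obtain ⟨h₁, h₂⟩ := hhigh p hp
        rw [fsMul_apply_of_ge h₁ h₂]
        rfl
    rw [himage, himage]
    exact hgg'.comp_right ((isCollapse_sub (by omega)).isSimplicialMap.prodMap
      (isCollapse_sub (by omega)).isSimplicialMap) σ hσ
  · have hbase : ∀ a b, IsFaceSphere X x₀ m n a → IsFaceSphere X x₀ r s b →
        σ.image (fsMul x₀ m n a b) ⊆ {x₀} := fun a b ha hb => by
      refine image_subset_iff.2 fun p hp => mem_singleton.2 ?_
      have := prodInterval_faces_le hσ hp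
      have := hmid p hp
      exact fsMul_apply_eq_base ha hb (by omega) (by omega) (by omega) (by omega)
    exact X.down_closed hf.singleton_base_mem (union_subset (hbase f g hf hg) (hbase f' g' hf' hg'))

theorem IsFaceSphere.fsMul (hf : IsFaceSphere X x₀ m n f) (hg : IsFaceSphere X x₀ r s g) :
    IsFaceSphere X x₀ (m + r + 1) (n + s + 1) (fsMul x₀ m n f g) :=
  ⟨contiguous_self_iff.1 (contiguous_fsMul hf hf hg hg (contiguous_self_iff.2 hf.1)
      (contiguous_self_iff.2 hg.1)),
    fun _ hp₁ hp₂ hp => fsMul_apply_eq_base hf hg hp₁ hp₂ (by omega) (by omega)⟩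

theorem FaceContigEquiv.fsMul_left {f' : ℕ × ℕ → V} (hg : IsFaceSphere X x₀ r s g)
    (h : FaceContigEquiv X x₀ m n f f') :
    FaceContigEquiv X x₀ (m + r + 1) (n + s + 1) (fsMul x₀ m n f g) (fsMul x₀ m n f' g) :=
  ReflTransGen.lift (fsMul x₀ m n · g) (fun _ _ ⟨ha, hb, hab⟩ => ⟨ha.fsMul hg, hb.fsMul hg,
    contiguous_fsMul ha hb hg hg hab (contiguous_self_iff.2 hg.1)⟩) _ _ h

theorem FaceContigEquiv.fsMul_right {g' : ℕ × ℕ → V} (hf : IsFaceSphere X x₀ m n f)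
    (h : FaceContigEquiv X x₀ r s g g') :
    FaceContigEquiv X x₀ (m + r + 1) (n + s + 1) (fsMul x₀ m n f g) (fsMul x₀ m n f g') :=
  ReflTransGen.lift (fsMul x₀ m n f) (fun _ _ ⟨ha, hb, hab⟩ => ⟨hf.fsMul ha, hf.fsMul hb,
    contiguous_fsMul hf hf ha hb (contiguous_self_iff.2 hf.1) hab⟩) _ _ h

theorem fsMul_comp_prodMap {M N : ℕ} {φ χ φ' χ' : ℕ → ℕ}
    (hφ : ∀ i ≤ M, φ i ≤ m) (hχ : ∀ j ≤ N, χ j ≤ n) :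
    fsMul x₀ M N (f ∘ Prod.map φ χ) (g ∘ Prod.map φ' χ') =
      fsMul x₀ m n f g ∘ Prod.map (blockMap M m φ φ') (blockMap N n χ χ') := by
  funext ⟨i, j⟩
  have := hφ i
  have := hχ j
  simp only [Function.comp_apply, Prod.map_apply, blockMap, fsMul]
  split_ifs <;> first | omega | simp

end FsMul

theorem faceContigEquiv_trivExt_fsMul {V : Type} [DecidableEq V] {X : ASC V} {x₀ : V}
    {m n r s M N M' N' : ℕ} {f g : ℕ × ℕ → V}
    (hf : IsFaceSphere X x₀ m n f) (hg : IsFaceSphere X x₀ r s g)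
    (hm : m ≤ M) (hn : n ≤ N) (hr : r ≤ M') (hs : s ≤ N') :
    FaceContigEquiv X x₀ (M + M' + 1) (N + N' + 1)
      (trivExt (m + r + 1) (n + s + 1) (M + M' + 1 - (m + r + 1)) (N + N' + 1 - (n + s + 1))
        (fsMul x₀ m n f g))
      (fsMul x₀ M N (trivExt m n (M - m) (N - n) f) (trivExt r s (M' - r) (N' - s) g)) := by
  have hαm := isCollapse_iterate_alpha hm
  have hαn := isCollapse_iterate_alpha hn
  rw [trivExt, trivExt, trivExt, fsMul_comp_prodMap (fun _ => hαm.le_top) (fun _ => hαn.le_top)]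
  exact (hf.fsMul hg).faceContigEquiv_comp_prodMap (isCollapse_iterate_alpha (by omega))
    (isCollapse_iterate_alpha (by omega)) (hαm.blockMap (isCollapse_iterate_alpha hr))
    (hαn.blockMap (isCollapse_iterate_alpha hs))

/-- the product of face spheres is well defined on
extension-contiguity equivalence classes. -/
theorem fsMul_well_defined {V : Type} [DecidableEq V] (X : ASC V) (x₀ : V)
    (m₁ n₁ m₂ n₂ r₁ s₁ r₂ s₂ : ℕ) (f₁ f₂ g₁ g₂ : ℕ × ℕ → V)
    (hf₁ : IsFaceSphere X x₀ m₁ n₁ f₁) (hf₂ : IsFaceSphere X x₀ m₂ n₂ f₂)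
    (hg₁ : IsFaceSphere X x₀ r₁ s₁ g₁) (hg₂ : IsFaceSphere X x₀ r₂ s₂ g₂)
    (hf : ExtContigEquiv X x₀ m₁ n₁ f₁ m₂ n₂ f₂)
    (hg : ExtContigEquiv X x₀ r₁ s₁ g₁ r₂ s₂ g₂) :
    ExtContigEquiv X x₀ (m₁ + r₁ + 1) (n₁ + s₁ + 1) (fsMul x₀ m₁ n₁ f₁ g₁)
      (m₂ + r₂ + 1) (n₂ + s₂ + 1) (fsMul x₀ m₂ n₂ f₂ g₂) := by
  obtain ⟨M, N, hm₁, hm₂, hn₁, hn₂, hF⟩ := hf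
  obtain ⟨M', N', hr₁, hr₂, hs₁, hs₂, hG⟩ := hg
  refine ⟨M + M' + 1, N + N' + 1, by omega, by omega, by omega, by omega, ?_⟩
  exact (faceContigEquiv_trivExt_fsMul hf₁ hg₁ hm₁ hn₁ hr₁ hs₁).trans <|
    ((hF.fsMul_left (hg₁.trivExt hr₁ hs₁)).trans (hG.fsMul_right (hf₂.trivExt hm₂ hn₂))).trans
    (faceContigEquiv_trivExt_fsMul hf₂ hg₂ hm₂ hn₂ hr₂ hs₂).symm
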